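/- arXiv:2309.04537 — 4 statements merged into one kernel-verified Lean document; each statement's English description precedes it below -/
import Mathlib

section
/- Let Γ be a greedoid with rank function ρ. Define a relation ⋈ on the ground set by e ⋈ f iff e and f are parallel, meaning that for all subsets A, ρ(A ∪ {e}) = ρ(A ∪ {f}) = ρ(A ∪ {e} ∪ {f}). Then ⋈ is an equivalence relation. -/
/-- Let `Γ` be a greedoid with rank function `ρ`. The relation
`e ⋈ f` iff `e` and `f` are parallel (i.e. for every subset `A`,
`ρ(A ∪ {e}) = ρ(A ∪ {f}) = ρ(A ∪ {e} ∪ {f})`) is an equivalence relation. -/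
theorem greedoid_parallel_equivalence
    {E : Type*} [DecidableEq E] [Fintype E] (ρ : Finset E → ℕ)
    (hGR1 : ∀ A : Finset E, ρ A ≤ A.card)
    (hGR2 : ∀ A B : Finset E, A ⊆ B → ρ A ≤ ρ B)
    (hGR3 : ∀ (A : Finset E) (e f : E),
      ρ (insert e A) = ρ A → ρ (insert f A) = ρ A →
      ρ (insert e (insert f A)) = ρ A) :
    Equivalence (fun e f : E => ∀ A : Finset E,
      ρ (insert e A) = ρ (insert f A) ∧
      ρ (insert e A) = ρ (insert e (insert f A))) := by
  constructor
  · intro e A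
    simp [Finset.insert_idem]
  · intro e f h A
    obtain ⟨h1, h2⟩ := h A
    refine ⟨h1.symm, ?_⟩
    rw [← h1, Finset.insert_comm]
    exact h2
  · intro e f g hef hfg A
    obtain ⟨hef1, hef2⟩ := hef A
    obtain ⟨hfg1, hfg2⟩ := hfg A
    refine ⟨hef1.trans hfg1, ?_⟩
    -- ρ (insert e A) = ρ (insert g (insert e A))
    obtain ⟨h1, h2⟩ := hfg (insert e A)
    have hfe : ρ (insert f (insert e A)) = ρ (insert e A) := by
      rw [Finset.insert_comm]; exact hef2.symm
    rw [Finset.insert_comm]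
    rw [← h1, hfe]
end

section
/- Let Γ₁ and Γ₂ be greedoids with disjoint ground sets and let f be a Γ₁-attachment function. Then the Γ₂-attachment Γ₁ ∼_f Γ₂ is a greedoid. -/
/-- A greedoid on a finite ground set `E`, given by its collection of feasible sets. -/
structure Greedoid (E : Type*) [DecidableEq E] [Fintype E] where
  /-- The collection of feasible sets. -/
  feasible : Finset (Finset E)
  /-- The empty set is feasible. -/
  empty_mem : ∅ ∈ feasible
  /-- The exchange axiom (G2). -/
  exchange : ∀ F₁ ∈ feasible, ∀ F₂ ∈ feasible, F₂.card < F₁.card →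
      ∃ x ∈ F₁ \ F₂, insert x F₂ ∈ feasible

namespace Greedoid

variable {E : Type*} [DecidableEq E] [Fintype E]

/-- The rank of a set `A`: the maximum size of a feasible subset of `A`. -/
def rank (Γ : Greedoid E) (A : Finset E) : ℕ :=
  (Γ.feasible.filter (fun B => B ⊆ A)).sup Finset.card

/-- The Tutte polynomial of a greedoid, evaluated at `(x, y) ∈ ℚ²`. -/
noncomputable def tutte (Γ : Greedoid E) (x y : ℚ) : ℚ :=
  ∑ A : Finset E,
    (x - 1) ^ (Γ.rank Finset.univ - Γ.rank A) * (y - 1) ^ (A.card - Γ.rank A)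

/-- An element is a loop if it belongs to no feasible set. -/
def IsLoop (Γ : Greedoid E) (e : E) : Prop := ∀ F ∈ Γ.feasible, e ∉ F

/-- Two elements are parallel if `ρ(A ∪ e) = ρ(A ∪ f) = ρ(A ∪ e ∪ f)` for all `A`. -/
def Parallel (Γ : Greedoid E) (e f : E) : Prop :=
  ∀ A : Finset E,
    Γ.rank (insert e A) = Γ.rank (insert f A) ∧
    Γ.rank (insert e A) = Γ.rank (insert e (insert f A))

/-- The closure of a set `A`: all elements whose addition does not increase the rank. -/
def closure (Γ : Greedoid E) (A : Finset E) : Finset E :=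
  Finset.univ.filter (fun e => Γ.rank (insert e A) = Γ.rank A)

end Greedoid


/-- The part of a subset of the attachment ground set lying in the ground set of `Γ₁`. -/
def attachPart0 {E₀ E₂ : Type*} [DecidableEq E₀] [Fintype E₀] [DecidableEq E₂] {r : ℕ}
    (F : Finset (E₀ ⊕ (Fin r × E₂))) : Finset E₀ :=
  Finset.univ.filter (fun e => Sum.inl e ∈ F)

/-- The part of a subset of the attachment ground set lying in the `i`-th copy of the
ground set of `Γ₂`. -/
def attachSlice {E₀ E₂ : Type*} [DecidableEq E₀] [DecidableEq E₂] [Fintype E₂] {r : ℕ}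
    (i : Fin r) (F : Finset (E₀ ⊕ (Fin r × E₂))) : Finset E₂ :=
  Finset.univ.filter (fun e => Sum.inr (i, e) ∈ F)

/-- Feasibility in the attachment `Γ₁ ∼_f Γ₂`: the `E₀`-part is feasible in `Γ₁`, each
slice is feasible in `Γ₂`, and slices not indexed by `f` of the `E₀`-part are empty. -/
def AttachFeasible {E₀ E₂ : Type*} [DecidableEq E₀] [Fintype E₀] [DecidableEq E₂] [Fintype E₂]
    (Γ₁ : Greedoid E₀) (Γ₂ : Greedoid E₂)
    (f : Finset E₀ → Finset (Fin (Γ₁.rank Finset.univ)))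
    (F : Finset (E₀ ⊕ (Fin (Γ₁.rank Finset.univ) × E₂))) : Prop :=
  attachPart0 F ∈ Γ₁.feasible ∧
  (∀ i, attachSlice i F ∈ Γ₂.feasible) ∧
  (∀ i, i ∉ f (attachPart0 F) → attachSlice i F = ∅)

section Aux

variable {E : Type*} [DecidableEq E] [Fintype E]

lemma aux_rank_feasible (Γ : Greedoid E) {F : Finset E} (hF : F ∈ Γ.feasible) :
    Γ.rank F = F.card := by
  apply le_antisymm
  · exact Finset.sup_le fun B hB => Finset.card_le_card (Finset.mem_filter.mp hB).2
  · exact Finset.le_sup (Finset.mem_filter.mpr ⟨hF, Finset.Subset.refl F⟩)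

lemma aux_rank_mono (Γ : Greedoid E) {A B : Finset E} (h : A ⊆ B) :
    Γ.rank A ≤ Γ.rank B := by
  apply Finset.sup_mono
  intro C hC
  rw [Finset.mem_filter] at hC ⊢
  exact ⟨hC.1, hC.2.trans h⟩

lemma aux_subset_closure (Γ : Greedoid E) (A : Finset E) : A ⊆ Γ.closure A := by
  intro e he
  simp [Greedoid.closure, Finset.insert_eq_self.mpr he]

lemma aux_feasible_insert_of_rank_ne (Γ : Greedoid E) {A : Finset E} (hA : A ∈ Γ.feasible)
    {x : E} (hx : Γ.rank (insert x A) ≠ Γ.rank A) :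
    x ∉ A ∧ insert x A ∈ Γ.feasible := by
  have hxA : x ∉ A := fun h => hx (by rw [Finset.insert_eq_self.mpr h])
  refine ⟨hxA, ?_⟩
  have h1 : Γ.rank A = A.card := aux_rank_feasible Γ hA
  have h2 : Γ.rank A ≤ Γ.rank (insert x A) := aux_rank_mono Γ (Finset.subset_insert x A)
  have h3 : A.card < Γ.rank (insert x A) := by omega
  obtain ⟨B, hB, hBcard⟩ : ∃ B ∈ Γ.feasible.filter (fun B => B ⊆ insert x A),
      A.card < B.card := by
    by_contra hc
    push_neg at hc
    have : Γ.rank (insert x A) ≤ A.card := Finset.sup_le hc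
    omega
  rw [Finset.mem_filter] at hB
  obtain ⟨y, hy, hfeas⟩ := Γ.exchange B hB.1 A hA hBcard
  rw [Finset.mem_sdiff] at hy
  have hyx : y = x := by
    have := hB.2 hy.1
    rw [Finset.mem_insert] at this
    tauto
  rwa [hyx] at hfeas

end Aux

section AttachAux

variable {E₀ E₂ : Type*} [DecidableEq E₀] [Fintype E₀] [DecidableEq E₂] [Fintype E₂] {r : ℕ}

@[simp] lemma mem_attachPart0 {F : Finset (E₀ ⊕ (Fin r × E₂))} {e : E₀} :
    e ∈ attachPart0 F ↔ Sum.inl e ∈ F := by simp [attachPart0]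

@[simp] lemma mem_attachSlice {F : Finset (E₀ ⊕ (Fin r × E₂))} {i : Fin r} {e : E₂} :
    e ∈ attachSlice i F ↔ Sum.inr (i, e) ∈ F := by simp [attachSlice]

@[simp] lemma attachPart0_empty :
    attachPart0 (∅ : Finset (E₀ ⊕ (Fin r × E₂))) = ∅ := by
  ext e; simp

@[simp] lemma attachSlice_empty (i : Fin r) :
    attachSlice i (∅ : Finset (E₀ ⊕ (Fin r × E₂))) = ∅ := by
  ext e; simp

lemma attachPart0_insert_inl (x : E₀) (F : Finset (E₀ ⊕ (Fin r × E₂))) :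
    attachPart0 (insert (Sum.inl x) F) = insert x (attachPart0 F) := by
  ext e; simp

lemma attachPart0_insert_inr (p : Fin r × E₂) (F : Finset (E₀ ⊕ (Fin r × E₂))) :
    attachPart0 (insert (Sum.inr p) F) = attachPart0 F := by
  ext e; simp

lemma attachSlice_insert_inl (i : Fin r) (x : E₀) (F : Finset (E₀ ⊕ (Fin r × E₂))) :
    attachSlice i (insert (Sum.inl x) F) = attachSlice i F := by
  ext e; simp

lemma attachSlice_insert_inr (i : Fin r) (p : Fin r × E₂) (F : Finset (E₀ ⊕ (Fin r × E₂))) :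
    attachSlice i (insert (Sum.inr p) F) =
      if p.1 = i then insert p.2 (attachSlice i F) else attachSlice i F := by
  ext e
  by_cases h : p.1 = i
  · obtain ⟨j, y⟩ := p
    simp only at h
    subst h
    simp [Prod.ext_iff, eq_comm]
  · simp only [h, if_false, mem_attachSlice, Finset.mem_insert]
    constructor
    · rintro (heq | hmem)
      · exact absurd (Prod.ext_iff.mp (Sum.inr_injective heq.symm)).1 h
      · exact hmem
    · exact Or.inr

lemma attach_card (F : Finset (E₀ ⊕ (Fin r × E₂))) :
    F.card = (attachPart0 F).card + ∑ i, (attachSlice i F).card := by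
  have hrepr : F = ((attachPart0 F).image Sum.inl) ∪
      (Finset.univ.biUnion fun i => (attachSlice i F).image fun e => Sum.inr (i, e)) := by
    ext x
    rcases x with e | ⟨i, e⟩
    · simp
    · simp [Prod.ext_iff]
  have hdisj : Disjoint ((attachPart0 F).image Sum.inl)
      (Finset.univ.biUnion fun i => (attachSlice i F).image fun e => Sum.inr (i, e)) := by
    rw [Finset.disjoint_left]
    intro a ha hb
    simp only [Finset.mem_image] at ha
    simp only [Finset.mem_biUnion, Finset.mem_image] at hb
    obtain ⟨e, _, rfl⟩ := ha
    obtain ⟨i, _, e', _, h⟩ := hb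
    exact Sum.inl_ne_inr h.symm
  conv_lhs => rw [hrepr]
  rw [Finset.card_union_of_disjoint hdisj,
    Finset.card_image_of_injective _ Sum.inl_injective,
    Finset.card_biUnion]
  · congr 1
    apply Finset.sum_congr rfl
    intro i _
    exact Finset.card_image_of_injective _ (fun a b hab => by simpa using hab)
  · intro i _ j _ hij
    rw [Function.onFun, Finset.disjoint_left]
    intro a ha hb
    simp only [Finset.mem_image] at ha hb
    obtain ⟨e, _, rfl⟩ := ha
    obtain ⟨e', _, h⟩ := hb
    apply hij
    exact (Prod.ext_iff.mp (Sum.inr_injective h.symm)).1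

end AttachAux

/-- Let `Γ₁` and `Γ₂` be greedoids with disjoint ground sets and let `f`
be a `Γ₁`-attachment function. Then the `Γ₂`-attachment `Γ₁ ∼_f Γ₂` is a greedoid:
the empty set is feasible and the exchange axiom holds. -/
theorem attachment_is_greedoid
    {E₀ E₂ : Type*} [DecidableEq E₀] [Fintype E₀] [DecidableEq E₂] [Fintype E₂]
    (Γ₁ : Greedoid E₀) (Γ₂ : Greedoid E₂)
    (f : Finset E₀ → Finset (Fin (Γ₁.rank Finset.univ)))
    (hf1 : ∀ F ∈ Γ₁.feasible, (f F).card = Γ₁.rank F)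
    (hf2 : ∀ F₁ ∈ Γ₁.feasible, ∀ F₂ ∈ Γ₁.feasible, F₁ ⊆ Γ₁.closure F₂ → f F₁ ⊆ f F₂) :
    AttachFeasible Γ₁ Γ₂ f ∅ ∧
    (∀ F₁ F₂ : Finset (E₀ ⊕ (Fin (Γ₁.rank Finset.univ) × E₂)),
      AttachFeasible Γ₁ Γ₂ f F₁ → AttachFeasible Γ₁ Γ₂ f F₂ → F₂.card < F₁.card →
      ∃ x ∈ F₁ \ F₂, AttachFeasible Γ₁ Γ₂ f (insert x F₂)) := by
  constructor
  · refine ⟨by simpa using Γ₁.empty_mem, fun i => by simpa using Γ₂.empty_mem, fun i _ => by simp⟩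
  · intro F₁ F₂ hF₁ hF₂ hlt
    obtain ⟨hA₁, hS₁, hE₁⟩ := hF₁
    obtain ⟨hA₂, hS₂, hE₂⟩ := hF₂
    by_cases h : ∃ i ∈ f (attachPart0 F₂), (attachSlice i F₂).card < (attachSlice i F₁).card
    -- Case 1: exchange within a slice indexed by f (attachPart0 F₂).
    · obtain ⟨i, hi, hilt⟩ := h
      obtain ⟨x, hx, hins⟩ := Γ₂.exchange _ (hS₁ i) _ (hS₂ i) hilt
      rw [Finset.mem_sdiff, mem_attachSlice, mem_attachSlice] at hx
      refine ⟨Sum.inr (i, x), Finset.mem_sdiff.mpr ⟨hx.1, hx.2⟩, ?_, ?_, ?_⟩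
      · rwa [attachPart0_insert_inr]
      · intro j
        rw [attachSlice_insert_inr]
        by_cases hji : i = j
        · subst hji
          simpa using hins
        · simp only [hji, if_false]
          exact hS₂ j
      · intro j hj
        rw [attachPart0_insert_inr] at hj
        rw [attachSlice_insert_inr]
        by_cases hji : i = j
        · subst hji; exact absurd hi hj
        · simp only [hji, if_false]
          exact hE₂ j hj
    -- Case 2: exchange in the ground set of Γ₁.
    · push_neg at h
      have key : ∃ x, x ∈ attachPart0 F₁ ∧ x ∉ attachPart0 F₂ ∧
          insert x (attachPart0 F₂) ∈ Γ₁.feasible := by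
        by_cases hA : (attachPart0 F₂).card < (attachPart0 F₁).card
        · obtain ⟨x, hx, hfeas⟩ := Γ₁.exchange _ hA₁ _ hA₂ hA
          rw [Finset.mem_sdiff] at hx
          exact ⟨x, hx.1, hx.2, hfeas⟩
        · push_neg at hA
          have hsum : ∑ i, (attachSlice i F₂).card < ∑ i, (attachSlice i F₁).card := by
            have h1 := attach_card F₁
            have h2 := attach_card F₂
            omega
          have hex : ∃ i, i ∉ f (attachPart0 F₂) ∧ attachSlice i F₁ ≠ ∅ := by
            by_contra hc
            push_neg at hc
            have heq : ∑ i ∈ f (attachPart0 F₂), (attachSlice i F₁).card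
                = ∑ i, (attachSlice i F₁).card :=
              Finset.sum_subset (Finset.subset_univ _)
                (fun i _ hi => by rw [hc i hi]; simp)
            have h1 : ∑ i ∈ f (attachPart0 F₂), (attachSlice i F₁).card
                ≤ ∑ i ∈ f (attachPart0 F₂), (attachSlice i F₂).card :=
              Finset.sum_le_sum h
            have h2 : ∑ i ∈ f (attachPart0 F₂), (attachSlice i F₂).card
                ≤ ∑ i, (attachSlice i F₂).card :=
              Finset.sum_le_sum_of_subset (Finset.subset_univ _)
            omega
          obtain ⟨i, hi1, hi2⟩ := hex
          have hiA1 : i ∈ f (attachPart0 F₁) := by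
            by_contra hc; exact hi2 (hE₁ i hc)
          have hns : ¬ attachPart0 F₁ ⊆ Γ₁.closure (attachPart0 F₂) := fun hsub =>
            hi1 (hf2 _ hA₁ _ hA₂ hsub hiA1)
          obtain ⟨x, hx1, hx2⟩ := Finset.not_subset.mp hns
          have hrank : Γ₁.rank (insert x (attachPart0 F₂)) ≠ Γ₁.rank (attachPart0 F₂) := by
            simp only [Greedoid.closure, Finset.mem_filter, Finset.mem_univ, true_and] at hx2
            exact hx2
          obtain ⟨hxA, hfeas⟩ := aux_feasible_insert_of_rank_ne Γ₁ hA₂ hrank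
          exact ⟨x, hx1, hxA, hfeas⟩
      obtain ⟨x, hx1, hx2, hfeas⟩ := key
      have hmono : f (attachPart0 F₂) ⊆ f (insert x (attachPart0 F₂)) :=
        hf2 _ hA₂ _ hfeas
          ((Finset.subset_insert x _).trans (aux_subset_closure Γ₁ _))
      refine ⟨Sum.inl x, Finset.mem_sdiff.mpr ⟨mem_attachPart0.mp hx1,
        fun hc => hx2 (mem_attachPart0.mpr hc)⟩, ?_, ?_, ?_⟩
      · rwa [attachPart0_insert_inl]
      · intro j
        rw [attachSlice_insert_inl]
        exact hS₂ j
      · intro j hj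
        rw [attachPart0_insert_inl] at hj
        rw [attachSlice_insert_inl]
        exact hE₂ j (fun hc => hj (hmono hc))
end

section
/- Let G be a connected rooted graph with root r and let G' be the underlying unrooted graph. Then T(Γ(G); 1, y) = T(G'; 1, y), where the left side is the greedoid Tutte polynomial of the branching greedoid of G and the right side is the classical Tutte polynomial of G'. -/
open scoped Classical

/-- Feasibility in the branching greedoid of a rooted graph `(G, r)`: a set `A` of edges
of `G` is feasible iff the connected component of the root in the spanning subgraph with
edge set `A` is a tree containing every edge of `A`. -/
def GFeasible {V : Type*} (G : SimpleGraph V) (r : V) (A : Finset (Sym2 V)) : Prop :=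
  (∀ e ∈ A, e ∈ G.edgeSet) ∧
  (∀ e ∈ A, ∀ v ∈ e, (SimpleGraph.fromEdgeSet (↑A : Set (Sym2 V))).Reachable r v) ∧
  {v | (SimpleGraph.fromEdgeSet (↑A : Set (Sym2 V))).Reachable r v}.ncard = A.card + 1

/-- The rank function of the branching greedoid of a rooted graph `(G, r)`. -/
noncomputable def gRank {V : Type*} (G : SimpleGraph V) (r : V) (A : Finset (Sym2 V)) : ℕ :=
  (A.powerset.filter (GFeasible G r)).sup Finset.card

/-- The Tutte polynomial of the branching greedoid of a rooted graph `(G, r)`. -/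
noncomputable def rootedTutte {V : Type*} [Fintype V]
    (G : SimpleGraph V) (r : V) (x y : ℚ) : ℚ :=
  ∑ A ∈ G.edgeFinset.powerset,
    (x - 1) ^ (gRank G r G.edgeFinset - gRank G r A) *
      (y - 1) ^ (A.card - gRank G r A)


/-- The classical (matroidal) rank of an edge set `A` in a graph on vertex set `V`:
`r(A) = |V| − k(G|A)`, where `k(G|A)` is the number of connected components of the
spanning subgraph with edge set `A`. -/
noncomputable def graphRank {V : Type*} [Fintype V] (A : Finset (Sym2 V)) : ℕ :=
  Fintype.card V -
    Nat.card (SimpleGraph.fromEdgeSet (↑A : Set (Sym2 V))).ConnectedComponent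

/-- The classical Tutte polynomial of a graph (via the Whitney rank generating
function). -/
noncomputable def classicalTutte {V : Type*} [Fintype V]
    (G : SimpleGraph V) (x y : ℚ) : ℚ :=
  ∑ A ∈ G.edgeFinset.powerset,
    (x - 1) ^ (graphRank (V := V) G.edgeFinset - graphRank (V := V) A) *
      (y - 1) ^ (A.card - graphRank (V := V) A)

section
variable {V : Type*}

/-- Removing a non-bridge edge of a connected graph keeps it connected. -/
lemma connected_sdiff_of_not_isBridge {H : SimpleGraph V} (hc : H.Connected)
    {x y : V} (hadj : H.Adj x y) (hr : (H \ SimpleGraph.fromEdgeSet {s(x, y)}).Reachable x y) :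
    (H \ SimpleGraph.fromEdgeSet {s(x, y)}).Connected := by
  set H' := H \ SimpleGraph.fromEdgeSet {s(x, y)} with hH'
  have key : ∀ a b : V, H.Adj a b → H'.Reachable a b := by
    intro a b hab
    by_cases he : s(a, b) = s(x, y)
    · rw [Sym2.eq_iff] at he
      rcases he with ⟨rfl, rfl⟩ | ⟨rfl, rfl⟩
      · exact hr
      · exact hr.symm
    · refine SimpleGraph.Adj.reachable ?_
      rw [hH', SimpleGraph.sdiff_adj]
      refine ⟨hab, ?_⟩
      rw [SimpleGraph.fromEdgeSet_adj]
      simp only [Set.mem_singleton_iff]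
      tauto
  haveI := hc.nonempty
  refine SimpleGraph.Connected.mk fun a b => ?_
  obtain ⟨p⟩ := hc.preconnected a b
  induction p with
  | nil => exact SimpleGraph.Reachable.refl _
  | cons h q ih => exact (key _ _ h).trans ih
end

section
variable {V : Type*}

lemma exists_tree_subset : ∀ (n : ℕ) (A : Finset (Sym2 V)), A.card = n →
    (∀ e ∈ A, ¬ e.IsDiag) → (SimpleGraph.fromEdgeSet (↑A : Set (Sym2 V))).Connected →
    ∃ B ⊆ A, (SimpleGraph.fromEdgeSet (↑B : Set (Sym2 V))).IsTree := by
  intro n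
  induction n using Nat.strong_induction_on with
  | _ n ih =>
    intro A hcard hdiag hc
    set H := SimpleGraph.fromEdgeSet (↑A : Set (Sym2 V)) with hH
    by_cases hac : H.IsAcyclic
    · exact ⟨A, le_refl A, ⟨hc, hac⟩⟩
    · rw [SimpleGraph.IsAcyclic] at hac
      push_neg at hac
      obtain ⟨v, c, hcyc⟩ := hac
      have hne : c.edges ≠ [] := by
        have h3 := hcyc.three_le_length
        have hlen := SimpleGraph.Walk.length_edges c
        intro habs
        rw [habs] at hlen
        simp only [List.length_nil] at hlen
        omega
      set e := c.edges.head hne with he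
      have hmem : e ∈ c.edges := List.head_mem hne
      clear_value e
      clear he
      induction e using Sym2.ind with
      | _ v b =>
        have h : H.Adj v b := SimpleGraph.Walk.adj_of_mem_edges c hmem
        have hnb : ¬ H.IsBridge s(v, b) := by
          rw [SimpleGraph.isBridge_iff_forall_cycle_notMem h]
          push_neg
          exact ⟨_, c, hcyc, hmem⟩
        have hreach : (H \ SimpleGraph.fromEdgeSet {s(v, b)}).Reachable v b := by
          rw [SimpleGraph.isBridge_iff] at hnb
          push_neg at hnb
          exact hnb
        have hc' := connected_sdiff_of_not_isBridge hc h hreach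
        have heA : s(v, b) ∈ A := by
          have := h
          rw [hH, SimpleGraph.fromEdgeSet_adj] at this
          exact this.1
        have hgr : H \ SimpleGraph.fromEdgeSet {s(v, b)} =
            SimpleGraph.fromEdgeSet (↑(A.erase s(v, b)) : Set (Sym2 V)) := by
          ext a b'
          simp only [SimpleGraph.sdiff_adj, SimpleGraph.fromEdgeSet_adj, hH,
            Finset.coe_erase, Set.mem_diff, Set.mem_singleton_iff]
          tauto
        rw [hgr] at hc'
        have hlt : (A.erase s(v, b)).card < n := by
          rw [← hcard]
          exact Finset.card_erase_lt_of_mem heA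
        obtain ⟨B, hB, hBt⟩ := ih _ hlt (A.erase s(v, b)) rfl
          (fun e he => hdiag e (Finset.mem_of_mem_erase he)) hc'
        exact ⟨B, hB.trans (Finset.erase_subset _ _), hBt⟩
end

section
variable {V : Type*}

lemma gfeasible'_empty (G : SimpleGraph V) (r : V) : GFeasible G r ∅ := by
  refine ⟨by simp, by simp, ?_⟩
  have : {v | (SimpleGraph.fromEdgeSet ((↑(∅ : Finset (Sym2 V))) : Set (Sym2 V))).Reachable r v}
      = {r} := by
    ext v
    simp [SimpleGraph.fromEdgeSet_empty, SimpleGraph.reachable_bot, eq_comm]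
  rw [this]
  simp

lemma gRank_le [Fintype V] (G : SimpleGraph V) (r : V) (A : Finset (Sym2 V)) :
    gRank G r A ≤ Fintype.card V - 1 := by
  refine Finset.sup_le fun B hB => ?_
  rw [Finset.mem_filter] at hB
  have h := hB.2.2.2
  have hle : {v | (SimpleGraph.fromEdgeSet (↑B : Set (Sym2 V))).Reachable r v}.ncard
      ≤ Fintype.card V := by
    calc _ ≤ (Set.univ : Set V).ncard := Set.ncard_le_ncard (Set.subset_univ _) Set.finite_univ
    _ = Fintype.card V := by rw [Set.ncard_univ, Nat.card_eq_fintype_card]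
  omega

lemma gRank_eq_of_connected [Fintype V] (G : SimpleGraph V) (r : V) {A : Finset (Sym2 V)}
    (hA : A ⊆ G.edgeFinset) (hc : (SimpleGraph.fromEdgeSet (↑A : Set (Sym2 V))).Connected) :
    gRank G r A = Fintype.card V - 1 := by
  have hdiag : ∀ e ∈ A, ¬ e.IsDiag := fun e he =>
    SimpleGraph.not_isDiag_of_mem_edgeSet G (SimpleGraph.mem_edgeFinset.mp (hA he))
  obtain ⟨B, hBA, hBt⟩ := exists_tree_subset A.card A rfl hdiag hc
  have hBdiag : ∀ e ∈ B, ¬ e.IsDiag := fun e he => hdiag e (hBA he)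
  have hEF : (SimpleGraph.fromEdgeSet (↑B : Set (Sym2 V))).edgeFinset = B := by
    ext e
    simp only [SimpleGraph.mem_edgeFinset, SimpleGraph.edgeSet_fromEdgeSet, Set.mem_diff,
      Finset.mem_coe, Set.mem_setOf_eq]
    exact ⟨fun h => h.1, fun h => ⟨h, hBdiag e h⟩⟩
  have hBcard : B.card + 1 = Fintype.card V := by
    have := hBt.card_edgeFinset
    rwa [hEF] at this
  have huniv : {v | (SimpleGraph.fromEdgeSet (↑B : Set (Sym2 V))).Reachable r v} = Set.univ := by
    ext v
    simpa using hBt.isConnected.preconnected r v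
  have hfeas : GFeasible G r B := by
    refine ⟨fun e he => SimpleGraph.mem_edgeFinset.mp (hA (hBA he)),
      fun e _ v _ => hBt.isConnected.preconnected r v, ?_⟩
    rw [huniv, Set.ncard_univ, Nat.card_eq_fintype_card]
    omega
  refine le_antisymm (gRank_le G r A) ?_
  have hmem : B ∈ A.powerset.filter (GFeasible G r) :=
    Finset.mem_filter.mpr ⟨Finset.mem_powerset.mpr hBA, hfeas⟩
  have h2 : B.card ≤ gRank G r A := Finset.le_sup (f := Finset.card) hmem
  omega

lemma connected_of_gRank [Fintype V] [Nonempty V] (G : SimpleGraph V) (r : V)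
    {A : Finset (Sym2 V)} (h : gRank G r A = Fintype.card V - 1) :
    (SimpleGraph.fromEdgeSet (↑A : Set (Sym2 V))).Connected := by
  have hne : (A.powerset.filter (GFeasible G r)).Nonempty :=
    ⟨∅, Finset.mem_filter.mpr ⟨Finset.mem_powerset.mpr (Finset.empty_subset A),
      gfeasible'_empty G r⟩⟩
  obtain ⟨B, hBmem, hsup⟩ := Finset.exists_mem_eq_sup _ hne Finset.card
  rw [Finset.mem_filter, Finset.mem_powerset] at hBmem
  obtain ⟨hBA, _, _, hBcount⟩ := hBmem
  have hBcard : B.card = Fintype.card V - 1 := by rw [← h]; exact hsup.symm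
  have hn : 1 ≤ Fintype.card V := Fintype.card_pos
  have huniv : {v | (SimpleGraph.fromEdgeSet (↑B : Set (Sym2 V))).Reachable r v} = Set.univ := by
    refine Set.eq_of_subset_of_ncard_le (Set.subset_univ _) ?_ Set.finite_univ
    rw [Set.ncard_univ, Nat.card_eq_fintype_card, hBcount]
    omega
  have hall : ∀ v : V, (SimpleGraph.fromEdgeSet (↑A : Set (Sym2 V))).Reachable r v := by
    intro v
    have hv : v ∈ {v | (SimpleGraph.fromEdgeSet (↑B : Set (Sym2 V))).Reachable r v} := by
      rw [huniv]; trivial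
    exact hv.mono (SimpleGraph.fromEdgeSet_mono (Finset.coe_subset.mpr hBA))
  exact SimpleGraph.Connected.mk fun u v => (hall u).symm.trans (hall v)

lemma connected_iff_card_components [Fintype V] [Nonempty V] (H : SimpleGraph V) :
    H.Connected ↔ Nat.card H.ConnectedComponent = 1 := by
  haveI : Nonempty H.ConnectedComponent := ⟨H.connectedComponentMk (Classical.arbitrary V)⟩
  rw [Nat.card_eq_one_iff_unique]
  constructor
  · intro hc
    refine ⟨⟨?_⟩, inferInstance⟩
    exact SimpleGraph.ConnectedComponent.ind₂
      (fun u v => SimpleGraph.ConnectedComponent.sound (hc.preconnected u v))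
  · rintro ⟨hs, _⟩
    exact SimpleGraph.Connected.mk fun u v =>
      SimpleGraph.ConnectedComponent.exact (Subsingleton.elim _ _)

lemma card_components_le [Fintype V] (H : SimpleGraph V) :
    Nat.card H.ConnectedComponent ≤ Fintype.card V := by
  rw [← Nat.card_eq_fintype_card]
  exact Nat.card_le_card_of_surjective H.connectedComponentMk fun q => q.exists_rep

lemma card_components_pos [Fintype V] [Nonempty V] (H : SimpleGraph V) :
    1 ≤ Nat.card H.ConnectedComponent := by
  haveI : Nonempty H.ConnectedComponent := ⟨H.connectedComponentMk (Classical.arbitrary V)⟩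
  exact Nat.card_pos
end

/-- For a connected rooted graph `(G, r)`, the Tutte polynomial of its
branching greedoid agrees with the classical Tutte polynomial of the underlying unrooted
graph along the line `x = 1`. -/
theorem rootedTutte_eq_classicalTutte_at_one
    {V : Type*} [Fintype V] (G : SimpleGraph V) (r : V) (hG : G.Connected) (y : ℚ) :
    rootedTutte G r 1 y = classicalTutte G 1 y := by
  classical
  haveI : Nonempty V := hG.nonempty
  have hn : 0 < Fintype.card V := Fintype.card_pos
  have hEfull : SimpleGraph.fromEdgeSet (↑G.edgeFinset : Set (Sym2 V)) = G := by
    rw [SimpleGraph.coe_edgeFinset, SimpleGraph.fromEdgeSet_edgeSet]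
  have hgE : gRank G r G.edgeFinset = Fintype.card V - 1 :=
    gRank_eq_of_connected G r (Finset.Subset.refl _) (hEfull.symm ▸ hG)
  have hrE : graphRank (V := V) G.edgeFinset = Fintype.card V - 1 := by
    unfold graphRank
    rw [(connected_iff_card_components _).mp (hEfull.symm ▸ hG)]
  unfold rootedTutte classicalTutte
  refine Finset.sum_congr rfl fun A hA => ?_
  rw [Finset.mem_powerset] at hA
  have hgle := gRank_le G r A
  have hcpos := card_components_pos (SimpleGraph.fromEdgeSet (↑A : Set (Sym2 V)))
  have hcle := card_components_le (SimpleGraph.fromEdgeSet (↑A : Set (Sym2 V)))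
  by_cases hcA : (SimpleGraph.fromEdgeSet (↑A : Set (Sym2 V))).Connected
  · have h1 : gRank G r A = Fintype.card V - 1 := gRank_eq_of_connected G r hA hcA
    have h2 : graphRank (V := V) A = Fintype.card V - 1 := by
      unfold graphRank
      rw [(connected_iff_card_components _).mp hcA]
    rw [h1, h2, hgE, hrE]
  · have h1 : gRank G r A ≠ Fintype.card V - 1 := fun h => hcA (connected_of_gRank G r h)
    have h2 : Nat.card (SimpleGraph.fromEdgeSet (↑A : Set (Sym2 V))).ConnectedComponent ≠ 1 :=
      fun h => hcA ((connected_iff_card_components _).mpr h)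
    have hr2 : graphRank (V := V) A < Fintype.card V - 1 := by
      unfold graphRank
      omega
    rw [hgE, hrE]
    have h0 : ((1 : ℚ) - 1) = 0 := by norm_num
    rw [h0, zero_pow (by omega), zero_pow (by omega), zero_mul, zero_mul]
end

section
/- Let D be a root-connected rooted digraph with rank function ρ of its directed branching greedoid and s sinks. Then T(D; x, 0) = x^s if D is acyclic, and T(D; x, 0) = 0 if D contains a directed cycle. -/
open scoped Classical

/-- Feasibility in the directed branching greedoid of a rooted digraph `(D, r)` (the
digraph being given by its adjacency relation `D`): a set `A` of directed edges is
feasible iff the root component of the spanning subdigraph with edge set `A` is an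
arborescence rooted at `r` containing every edge of `A`. -/
def DFeasible {V : Type*} (D : V → V → Prop) (r : V) (A : Finset (V × V)) : Prop :=
  (∀ p ∈ A, D p.1 p.2) ∧
  (∀ p ∈ A, Relation.ReflTransGen (fun u v => (u, v) ∈ A) r p.1) ∧
  {v | Relation.ReflTransGen (fun u v => (u, v) ∈ A) r v}.ncard = A.card + 1

/-- The rank function of the directed branching greedoid of a rooted digraph `(D, r)`. -/
noncomputable def dRank {V : Type*} (D : V → V → Prop) (r : V) (A : Finset (V × V)) : ℕ :=
  (A.powerset.filter (DFeasible D r)).sup Finset.card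

/-- The edge set of a digraph on a finite vertex set, as a finset. -/
noncomputable def dEdgeFinset {V : Type*} [Fintype V] (D : V → V → Prop) :
    Finset (V × V) :=
  Finset.univ.filter (fun p => D p.1 p.2)

/-- The Tutte polynomial of the directed branching greedoid of a rooted digraph
`(D, r)`. -/
noncomputable def dTutte {V : Type*} [Fintype V] (D : V → V → Prop) (r : V)
    (x y : ℚ) : ℚ :=
  ∑ A ∈ (dEdgeFinset D).powerset,
    (x - 1) ^ (dRank D r (dEdgeFinset D) - dRank D r A) *
      (y - 1) ^ (A.card - dRank D r A)


/-- The number of sinks of a digraph: non-isolated vertices with no outgoing edge. -/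
noncomputable def sinkCount {V : Type*} (D : V → V → Prop) : ℕ :=
  {v | (∃ u, D u v ∨ D v u) ∧ ∀ w, ¬ D v w}.ncard

namespace DT

variable {V : Type*}

/-- reachability from `r` using edges in `A` -/
def rch (r : V) (A : Finset (V × V)) (v : V) : Prop :=
  Relation.ReflTransGen (fun u w : V => (u, w) ∈ A) r v

lemma rch_refl (r : V) (A : Finset (V × V)) : rch r A r := Relation.ReflTransGen.refl

lemma rch_mono {r : V} {A B : Finset (V × V)} (h : A ⊆ B) {v : V} (hv : rch r A v) :
    rch r B v :=
  Relation.ReflTransGen.mono (fun _ _ hab => h hab) _ _ hv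

lemma rch_insert_of_head {r : V} {A : Finset (V × V)} {e : V × V} (h : rch r A e.2) :
    ∀ {v}, rch r (insert e A) v → rch r A v := by
  intro v hv
  induction hv with
  | refl => exact rch_refl r A
  | @tail b c _ hbc ih =>
    rcases Finset.mem_insert.1 hbc with heq | hbc'
    · have : c = e.2 := by simp [← heq]
      exact this ▸ h
    · exact ih.tail hbc'

lemma rch_insert_of_tail_not {r : V} {A : Finset (V × V)} {e : V × V}
    (h : ¬ rch r A e.1) : ∀ {v}, rch r (insert e A) v → rch r A v := by
  intro v hv
  induction hv with
  | refl => exact rch_refl r A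
  | @tail b c _ hbc ih =>
    rcases Finset.mem_insert.1 hbc with heq | hbc'
    · have : b = e.1 := by simp [← heq]
      exact absurd (this ▸ ih) h
    · exact ih.tail hbc'

lemma insert_erase_eq {e : V × V} (A : Finset (V × V)) :
    insert e (A.erase e) = insert e A := by
  ext x
  simp only [Finset.mem_insert, Finset.mem_erase]
  constructor
  · rintro (rfl | ⟨-, h⟩) <;> [exact Or.inl rfl; exact Or.inr h]
  · rintro (rfl | h)
    · exact Or.inl rfl
    · by_cases hx : x = e
      · exact Or.inl hx
      · exact Or.inr ⟨hx, h⟩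

lemma rch_erase_of_tail_not {r : V} {A : Finset (V × V)} {e : V × V}
    (h : ¬ rch r (A.erase e) e.1) {v : V} (hv : rch r A v) : rch r (A.erase e) v := by
  have h1 : rch r (insert e (A.erase e)) v := by
    rw [insert_erase_eq]
    exact rch_mono (Finset.subset_insert _ _) hv
  exact rch_insert_of_tail_not h h1

/-- length-indexed reachability -/
def rchN (r : V) (A : Finset (V × V)) : ℕ → V → Prop
  | 0, v => v = r
  | (n+1), v => rchN r A n v ∨ ∃ u, rchN r A n u ∧ (u, v) ∈ A

lemma rchN_rch {r : V} {A : Finset (V × V)} : ∀ {n v}, rchN r A n v → rch r A v := by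
  intro n
  induction n with
  | zero => intro v hv; cases hv; exact rch_refl r A
  | succ n ih =>
    intro v hv
    rcases hv with hv | ⟨u, hu, he⟩
    · exact ih hv
    · exact (ih hu).tail he

lemma rch_rchN {r : V} {A : Finset (V × V)} {v : V} (hv : rch r A v) :
    ∃ n, rchN r A n v := by
  induction hv with
  | refl => exact ⟨0, rfl⟩
  | @tail b c _ hbc ih =>
    obtain ⟨n, hn⟩ := ih
    exact ⟨n + 1, Or.inr ⟨b, hn, hbc⟩⟩

/-- the descent lemma: if every path to `x` must use `e`, then any `B`-path to `x`
(with `B ⊆ A`) passes through `e.1` strictly earlier. -/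
lemma descend {r : V} {A B : Finset (V × V)} (hBA : B ⊆ A) (e : V × V) :
    ∀ n x, ¬ rch r (A.erase e) x → rchN r B n x → ∃ m, m < n ∧ rchN r B m e.1 := by
  intro n
  induction n with
  | zero =>
    intro x hx h0
    cases h0
    exact absurd (rch_refl r _) hx
  | succ n ih =>
    intro x hx hr
    rcases hr with hr | ⟨u, hu, hedge⟩
    · obtain ⟨m, hm, hm2⟩ := ih x hx hr
      exact ⟨m, Nat.lt_succ_of_lt hm, hm2⟩
    · by_cases hue : (u, x) = e
      · exact ⟨n, Nat.lt_succ_self n, by rw [← hue]; exact hu⟩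
      · have hmem : (u, x) ∈ A.erase e := Finset.mem_erase.2 ⟨hue, hBA hedge⟩
        have hun : ¬ rch r (A.erase e) u := fun hu' => hx (hu'.tail hmem)
        obtain ⟨m, hm, hm2⟩ := ih u hun hu
        exact ⟨m, Nat.lt_succ_of_lt hm, hm2⟩

lemma frontier {r : V} {A B : Finset (V × V)} (hBA : B ⊆ A) {v : V} (hv : rch r A v) :
    ¬ rch r B v → ∃ e, e ∈ A ∧ rch r B e.1 ∧ ¬ rch r B e.2 := by
  induction hv with
  | refl => exact fun h => absurd (rch_refl r B) h
  | @tail b c _ hbc ih =>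
    intro hnc
    by_cases hb : rch r B b
    · exact ⟨(b, c), hbc, hb, hnc⟩
    · exact ih hb

section Fin

variable [Fintype V]

/-- the set of reachable vertices as a finset -/
noncomputable def RF (r : V) (A : Finset (V × V)) : Finset V :=
  Finset.univ.filter (rch r A)

lemma mem_RF {r v : V} {A : Finset (V × V)} : v ∈ RF r A ↔ rch r A v := by
  simp [RF]

lemma r_mem_RF {r : V} {A : Finset (V × V)} : r ∈ RF r A := mem_RF.2 (rch_refl r A)

lemma RF_mono {r : V} {A B : Finset (V × V)} (h : A ⊆ B) : RF r A ⊆ RF r B := by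
  intro v hv; exact mem_RF.2 (rch_mono h (mem_RF.1 hv))

lemma ncard_eq_RF (r : V) (A : Finset (V × V)) :
    {v | Relation.ReflTransGen (fun u v => (u, v) ∈ A) r v}.ncard = (RF r A).card := by
  rw [Set.ncard_eq_toFinset_card', Set.toFinset_setOf]
  rfl

lemma RF_card_le {r : V} (A : Finset (V × V)) : (RF r A).card ≤ A.card + 1 := by
  have hsub : RF r A ⊆ insert r (A.image Prod.snd) := by
    intro v hv
    have := mem_RF.1 hv
    rcases this.cases_tail with h | ⟨c, _, hc⟩
    · simp [h]
    · exact Finset.mem_insert_of_mem (Finset.mem_image.2 ⟨(c, v), hc, rfl⟩)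
  calc (RF r A).card ≤ (insert r (A.image Prod.snd)).card := Finset.card_le_card hsub
    _ ≤ (A.image Prod.snd).card + 1 := Finset.card_insert_le _ _
    _ ≤ A.card + 1 := by have := Finset.card_image_le (s := A) (f := Prod.snd); omega

lemma rch_empty {r v : V} (h : rch r (∅ : Finset (V × V)) v) : v = r := by
  induction h with
  | refl => rfl
  | @tail b c _ hbc _ => simp at hbc

lemma RF_empty (r : V) : RF r (∅ : Finset (V × V)) = {r} := by
  ext v
  simp only [mem_RF, Finset.mem_singleton]
  exact ⟨rch_empty, fun h => h ▸ rch_refl r _⟩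

lemma feas_empty (D : V → V → Prop) (r : V) : DFeasible D r (∅ : Finset (V × V)) := by
  refine ⟨by simp, by simp, ?_⟩
  rw [show {v | Relation.ReflTransGen (fun u v => (u, v) ∈ (∅ : Finset (V × V))) r v}.ncard
      = (RF r (∅ : Finset (V × V))).card from ncard_eq_RF r ∅]
  simp [RF_empty]

lemma feas_card {D : V → V → Prop} {r : V} {B : Finset (V × V)} (hB : DFeasible D r B) :
    (RF r B).card = B.card + 1 := by
  rw [← ncard_eq_RF]
  exact hB.2.2

lemma feas_insert {D : V → V → Prop} {r : V} {B : Finset (V × V)} (hB : DFeasible D r B)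
    {e : V × V} (hD : D e.1 e.2) (h1 : rch r B e.1) (h2 : ¬ rch r B e.2) :
    DFeasible D r (insert e B) ∧ RF r (insert e B) = insert e.2 (RF r B) := by
  have hiff : ∀ v, rch r (insert e B) v ↔ (rch r B v ∨ v = e.2) := by
    intro v
    constructor
    · intro hv
      induction hv with
      | refl => exact Or.inl (rch_refl r B)
      | @tail b c _ hbc ih =>
        rcases Finset.mem_insert.1 hbc with heq | hbc'
        · exact Or.inr (by simp [← heq])
        · rcases ih with hb | hb
          · exact Or.inl (hb.tail hbc')
          · exfalso
            have : rch r B b := hB.2.1 (b, c) hbc'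
            rw [hb] at this
            exact h2 this
    · rintro (hv | rfl)
      · exact rch_mono (Finset.subset_insert _ _) hv
      · exact (rch_mono (Finset.subset_insert _ _) h1).tail (Finset.mem_insert_self e B)
  have hRF : RF r (insert e B) = insert e.2 (RF r B) := by
    ext v
    simp only [mem_RF, Finset.mem_insert, hiff v]
    tauto
  have heB : e ∉ B := fun hmem => h2 ((hB.2.1 e hmem).tail hmem)
  have he2 : e.2 ∉ RF r B := fun h => h2 (mem_RF.1 h)
  refine ⟨⟨?_, ?_, ?_⟩, hRF⟩
  · intro p hp
    rcases Finset.mem_insert.1 hp with rfl | hp'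
    · exact hD
    · exact hB.1 p hp'
  · intro p hp
    rcases Finset.mem_insert.1 hp with rfl | hp'
    · exact rch_mono (Finset.subset_insert _ _) h1
    · exact rch_mono (Finset.subset_insert _ _) (hB.2.1 p hp')
  · rw [show {v | Relation.ReflTransGen (fun u v => (u, v) ∈ insert e B) r v}.ncard
        = (RF r (insert e B)).card from ncard_eq_RF r _, hRF,
      Finset.card_insert_of_notMem he2, feas_card hB, Finset.card_insert_of_notMem heB]

lemma build {D : V → V → Prop} {r : V} {A : Finset (V × V)} (hE : ∀ p ∈ A, D p.1 p.2) :
    ∀ (m : ℕ) (B : Finset (V × V)), DFeasible D r B → B ⊆ A →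
      (RF r A).card ≤ (RF r B).card + m →
      ∃ B', B' ⊆ A ∧ DFeasible D r B' ∧ RF r B' = RF r A := by
  intro m
  induction m with
  | zero =>
    intro B hB hBA hcard
    have hsub : RF r B ⊆ RF r A := RF_mono hBA
    have := Finset.eq_of_subset_of_card_le hsub (by omega)
    exact ⟨B, hBA, hB, this⟩
  | succ m ih =>
    intro B hB hBA hcard
    by_cases heq : RF r B = RF r A
    · exact ⟨B, hBA, hB, heq⟩
    · have hsub : RF r B ⊆ RF r A := RF_mono hBA
      have hss : RF r B ⊂ RF r A := Finset.ssubset_iff_subset_ne.2 ⟨hsub, heq⟩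
      obtain ⟨v, hvA, hvB⟩ := Finset.exists_of_ssubset hss
      obtain ⟨e, heA, he1, he2⟩ := frontier hBA (mem_RF.1 hvA) (fun h => hvB (mem_RF.2 h))
      obtain ⟨hfeas, hRF⟩ := feas_insert hB (hE e heA) he1 he2
      have hcard' : (RF r (insert e B)).card = (RF r B).card + 1 := by
        rw [hRF, Finset.card_insert_of_notMem (fun h => he2 (mem_RF.1 h))]
      exact ih (insert e B) hfeas (Finset.insert_subset heA hBA) (by omega)

lemma dRank_add_one {D : V → V → Prop} {r : V} {A : Finset (V × V)}
    (hE : ∀ p ∈ A, D p.1 p.2) : dRank D r A + 1 = (RF r A).card := by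
  obtain ⟨B', hB'A, hB'feas, hB'RF⟩ :=
    build hE ((RF r A).card) ∅ (feas_empty D r) (Finset.empty_subset A)
      (by rw [RF_empty]; simp)
  have hcard : B'.card + 1 = (RF r A).card := by rw [← hB'RF, feas_card hB'feas]
  have hle : dRank D r A ≤ B'.card := by
    apply Finset.sup_le
    intro B hB
    rw [Finset.mem_filter, Finset.mem_powerset] at hB
    have h1 : (RF r B).card = B.card + 1 := feas_card hB.2
    have h2 : (RF r B).card ≤ (RF r A).card := Finset.card_le_card (RF_mono hB.1)
    omega
  have hge : B'.card ≤ dRank D r A :=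
    Finset.le_sup (Finset.mem_filter.2 ⟨Finset.mem_powerset.2 hB'A, hB'feas⟩)
  omega

lemma dRank_le_card {D : V → V → Prop} {r : V} (A : Finset (V × V)) :
    dRank D r A ≤ A.card := by
  apply Finset.sup_le
  intro B hB
  rw [Finset.mem_filter, Finset.mem_powerset] at hB
  exact Finset.card_le_card hB.1

lemma mem_dEdgeFinset {D : V → V → Prop} {p : V × V} :
    p ∈ dEdgeFinset D ↔ D p.1 p.2 := by simp [dEdgeFinset]

lemma RF_dEdgeFinset {D : V → V → Prop} {r : V}
    (hrc : ∀ v, Relation.ReflTransGen D r v) : RF r (dEdgeFinset D) = Finset.univ := by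
  ext v
  simp only [Finset.mem_univ, iff_true, mem_RF]
  exact Relation.ReflTransGen.mono (fun a b h => mem_dEdgeFinset.2 h) _ _ (hrc v)

end Fin
end DT

namespace DT

variable {V : Type*}

lemma chain_of_rtg {D : V → V → Prop} {a b : V} (h : Relation.ReflTransGen D a b) :
    ∃ (k : ℕ) (c : ℕ → V), c 0 = a ∧ c k = b ∧ ∀ j < k, D (c j) (c (j+1)) := by
  induction h with
  | refl => exact ⟨0, fun _ => a, rfl, rfl, by omega⟩
  | @tail p q _ h2 ih =>
    obtain ⟨k, c, h0, hk, hstep⟩ := ih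
    refine ⟨k + 1, fun j => if j ≤ k then c j else q, by simp [h0], by simp, ?_⟩
    intro j hj
    by_cases hjk : j < k
    · simp only [show j ≤ k from by omega, if_pos, show j + 1 ≤ k from by omega]
      simpa using hstep j hjk
    · have hjeq : j = k := by omega
      subst hjeq
      simp [hk, h2]

lemma closed_walk {D : V → V → Prop} (hcyc : ∃ u v, D u v ∧ Relation.ReflTransGen D v u) :
    ∃ (K : ℕ) (w : ℕ → V), 0 < K ∧ w K = w 0 ∧ ∀ j < K, D (w j) (w (j+1)) := by
  obtain ⟨u, v, huv, hvu⟩ := hcyc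
  obtain ⟨k, c, h0, hk, hstep⟩ := chain_of_rtg hvu
  refine ⟨k + 1, fun j => if j = 0 then u else c (j - 1), by omega, by simp [hk], ?_⟩
  intro j hj
  by_cases hj0 : j = 0
  · subst hj0; simpa [h0] using huv
  · have h1 : j - 1 < k := by omega
    have := hstep (j - 1) h1
    simp only [if_neg hj0, if_neg (show j + 1 ≠ 0 by omega)]
    have hsub : j + 1 - 1 = (j - 1) + 1 := by omega
    rw [hsub]
    exact this

section Fin

variable [Fintype V]

lemma safe_iff {r : V} {A : Finset (V × V)} {e : V × V} :
    RF r (insert e A) = RF r (A.erase e) ↔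
      ¬ (rch r (A.erase e) e.1 ∧ ¬ rch r (A.erase e) e.2) := by
  constructor
  · intro hsafe hc
    obtain ⟨h1, h2⟩ := hc
    have : rch r (insert e A) e.2 := by
      have h1' : rch r (insert e A) e.1 :=
        rch_mono (by rw [← insert_erase_eq]; exact Finset.subset_insert _ _) h1
      exact h1'.tail (Finset.mem_insert_self e A)
    have : e.2 ∈ RF r (A.erase e) := hsafe ▸ mem_RF.2 this
    exact h2 (mem_RF.1 this)
  · intro hc
    have hsub : RF r (A.erase e) ⊆ RF r (insert e A) :=
      RF_mono (by rw [← insert_erase_eq]; exact Finset.subset_insert _ _)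
    refine Finset.Subset.antisymm ?_ hsub
    intro v hv
    have hv' : rch r (insert e (A.erase e)) v := by
      rw [insert_erase_eq]; exact mem_RF.1 hv
    rcases not_and_or.1 hc with h1 | h2
    · exact mem_RF.2 (rch_insert_of_tail_not h1 hv')
    · exact mem_RF.2 (rch_insert_of_head (not_not.1 h2) hv')

lemma unsafe_parts {r : V} {A : Finset (V × V)} {e : V × V}
    (h : ¬ RF r (insert e A) = RF r (A.erase e)) :
    rch r (A.erase e) e.1 ∧ ¬ rch r (A.erase e) e.2 := by
  by_contra hc
  exact h (safe_iff.2 hc)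

/-- key descent-around-walk lemma: if all edges of the walk before index `t` are
"essential" in `A`, then the tail `w t` of the `t`-th walk edge is not reachable
once any earlier walk edge `ed s` is removed. -/
lemma walk_tail_not_reachable {r : V} {A : Finset (V × V)} {w : ℕ → V}
    (ed : ℕ → V × V) (hed : ∀ j, ed j = (w j, w (j+1)))
    {t s : ℕ} (hst : s < t)
    (hun : ∀ j < t, rch r (A.erase (ed j)) (w j) ∧ ¬ rch r (A.erase (ed j)) (w (j+1))) :
    ¬ rch r (A.erase (ed s)) (w t) := by
  intro hwt
  have key : ∀ i, i ≤ t - (s+1) → rch r (A.erase (ed s)) (w (t - i)) := by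
    intro i
    induction i with
    | zero => intro _; simpa using hwt
    | succ i ih =>
      intro hi
      have h1 : rch r (A.erase (ed s)) (w (t - i)) := ih (by omega)
      set j := t - (i + 1) with hj
      have hjs : s < j := by omega
      have hjt : j < t := by omega
      have hji : t - i = j + 1 := by omega
      rw [hji] at h1
      obtain ⟨n, hn⟩ := rch_rchN h1
      have hx : ¬ rch r (A.erase (ed j)) (w (j+1)) := (hun j hjt).2
      obtain ⟨m, _, hm⟩ := descend (Finset.erase_subset _ _) (ed j) n (w (j+1)) hx hn
      have : rch r (A.erase (ed s)) ((ed j).1) := rchN_rch hm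
      rw [hed j] at this
      exact this
  have hfin := key (t - (s+1)) le_rfl
  have hts : t - (t - (s+1)) = s + 1 := by omega
  rw [hts] at hfin
  exact (hun s (by omega)).2 hfin

end Fin
end DT

namespace DT

variable {V : Type*} [Fintype V]

lemma core_cyclic {D : V → V → Prop} {r : V}
    (hcyc : ∃ u v, D u v ∧ Relation.ReflTransGen D v u) (x : ℚ) :
    ∑ A ∈ (dEdgeFinset D).powerset,
      (x - 1) ^ (Fintype.card V - (RF r A).card) *
        (-1 : ℚ) ^ ((A.card + 1) - (RF r A).card) = 0 := by
  classical
  obtain ⟨K, w, hK, hwK, hstep⟩ := closed_walk hcyc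
  set ed : ℕ → V × V := fun j => (w j, w (j+1)) with hed
  have hedj : ∀ j, ed j = (w j, w (j+1)) := fun _ => rfl
  have hED : ∀ j < K, ed j ∈ dEdgeFinset D := fun j hj => mem_dEdgeFinset.2 (hstep j hj)
  set P := (dEdgeFinset D).powerset with hP
  have exSafe : ∀ A ∈ P, ∃ j, j < K ∧
      RF r (insert (ed j) A) = RF r (A.erase (ed j)) := by
    intro A hA
    by_contra hno
    push_neg at hno
    have hun : ∀ j < K, rch r (A.erase (ed j)) (w j) ∧
        ¬ rch r (A.erase (ed j)) (w (j+1)) := by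
      intro j hj
      have := unsafe_parts (hno j hj)
      simpa [hedj j] using this
    have hreach : ∀ j ≤ K, rch r A (w j) := by
      intro j hj
      rcases Nat.lt_or_ge j K with h | h
      · exact rch_mono (Finset.erase_subset _ _) (hun j h).1
      · have hjK : j = K := by omega
        subst hjK
        rw [hwK]
        exact rch_mono (Finset.erase_subset _ _) (hun 0 hK).1
    have hdm : ∀ j ≤ K, rchN r A (sInf {n | rchN r A n (w j)}) (w j) := by
      intro j hj
      exact Nat.sInf_mem (rch_rchN (hreach j hj))
    have hstrict : ∀ j < K,
        sInf {n | rchN r A n (w j)} < sInf {n | rchN r A n (w (j+1))} := by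
      intro j hj
      obtain ⟨m, hm, hm2⟩ := descend (Finset.Subset.refl A) (ed j)
        (sInf {n | rchN r A n (w (j+1))}) (w (j+1)) (hun j hj).2 (hdm (j+1) (by omega))
      have : sInf {n | rchN r A n (w j)} ≤ m := Nat.sInf_le (by simpa [hedj j] using hm2)
      omega
    have hmono : ∀ j ≤ K, sInf {n | rchN r A n (w 0)} + j ≤ sInf {n | rchN r A n (w j)} := by
      intro j
      induction j with
      | zero => intro _; omega
      | succ j ih =>
        intro hj
        have h1 := ih (by omega)
        have h2 := hstrict j (by omega)
        omega
    have hfin := hmono K (le_refl K)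
    rw [hwK] at hfin
    omega
  set tA : Finset (V × V) → ℕ :=
    fun A => if hA : A ∈ P then Nat.find (exSafe A hA) else 0 with htAdef
  set tog : Finset (V × V) → Finset (V × V) :=
    fun A => if ed (tA A) ∈ A then A.erase (ed (tA A)) else insert (ed (tA A)) A with htogdef
  have htA : ∀ A, A ∈ P → (tA A < K) ∧
      RF r (insert (ed (tA A)) A) = RF r (A.erase (ed (tA A))) := by
    intro A hA
    have := Nat.find_spec (exSafe A hA)
    simpa [htAdef, dif_pos hA] using this
  have htmin : ∀ A, A ∈ P → ∀ s, s < tA A →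
      ¬ RF r (insert (ed s) A) = RF r (A.erase (ed s)) := by
    intro A hA s hs
    have h3 : tA A = Nat.find (exSafe A hA) := by rw [htAdef]; simp only [dif_pos hA]
    rw [h3] at hs
    have h2 := Nat.find_min (exSafe A hA) hs
    push_neg at h2
    have h4 := (htA A hA).1
    rw [h3] at h4
    exact h2 (by omega)
  have htogP : ∀ A, A ∈ P → tog A ∈ P := by
    intro A hA
    rw [htogdef]
    simp only []
    rw [hP, Finset.mem_powerset] at hA ⊢
    by_cases heA : ed (tA A) ∈ A
    · rw [if_pos heA]
      exact (Finset.erase_subset _ _).trans hA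
    · rw [if_neg heA]
      exact Finset.insert_subset (hED _ (htA A (Finset.mem_powerset.2 hA)).1) hA
  have hRFtog : ∀ A, A ∈ P → RF r (tog A) = RF r A := by
    intro A hA
    obtain ⟨hjK, hsafe⟩ := htA A hA
    rw [htogdef]
    simp only []
    by_cases heA : ed (tA A) ∈ A
    · rw [if_pos heA]
      have h1 : RF r (A.erase (ed (tA A))) ⊆ RF r A := RF_mono (Finset.erase_subset _ _)
      have h2 : RF r A ⊆ RF r (A.erase (ed (tA A))) := by
        rw [← hsafe]
        exact RF_mono (Finset.subset_insert _ _)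
      exact Finset.Subset.antisymm h1 h2
    · rw [if_neg heA]
      rw [hsafe, Finset.erase_eq_of_notMem heA]
  -- SL lemma packaged
  have hSL : ∀ A, A ∈ P → ∀ s, s < tA A → ¬ rch r (A.erase (ed s)) (w (tA A)) := by
    intro A hA s hs
    exact walk_tail_not_reachable ed hedj hs (fun j hj => by
      have := unsafe_parts (htmin A hA j hj)
      simpa [hedj] using this)
  have httog : ∀ A, A ∈ P → tA (tog A) = tA A := by
    intro A hA
    obtain ⟨hjK, hsafe⟩ := htA A hA
    have htgP := htogP A hA
    have hkey : tA (tog A) = Nat.find (exSafe (tog A) htgP) := by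
      rw [htAdef]; simp only [dif_pos htgP]
    rw [hkey, Nat.find_eq_iff]
    constructor
    · refine ⟨hjK, ?_⟩
      rw [htogdef]
      simp only []
      by_cases heA : ed (tA A) ∈ A
      · rw [if_pos heA, insert_erase_eq, Finset.erase_idem]
        exact hsafe
      · rw [if_neg heA, Finset.insert_idem, Finset.erase_insert_eq_erase]
        exact hsafe
    · rintro s hs ⟨hsK, hsafe'⟩
      have hu := unsafe_parts (htmin A hA s hs)
      rw [hedj s] at hu
      obtain ⟨hs1, hs2⟩ := hu
      have hSLs : ¬ rch r (A.erase (ed s)) (w (tA A)) := hSL A hA s hs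
      have hnedr : ed (tA A) ≠ ed s := by
        intro hcontra
        exact htmin A hA s hs (by rw [← hcontra]; exact hsafe)
      -- derive unsafe parts for tog A at s, contradicting hsafe'
      apply (safe_iff.1 hsafe')
      rw [hedj s]
      by_cases heA : ed (tA A) ∈ A
      · have htogeq : tog A = A.erase (ed (tA A)) := by
          rw [htogdef]; simp only []; rw [if_pos heA]
        have hcomm : (tog A).erase (ed s) = (A.erase (ed s)).erase (ed (tA A)) := by
          rw [htogeq, Finset.erase_right_comm]
        have hnr : ¬ rch r ((A.erase (ed s)).erase (ed (tA A))) ((ed (tA A)).1) := by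
          intro hcontra
          exact hSLs (by
            have := rch_mono (Finset.erase_subset _ _) hcontra
            simpa [hedj] using this)
        constructor
        · rw [hcomm]
          exact rch_erase_of_tail_not hnr (by simpa [hedj] using hs1)
        · rw [hcomm]
          intro hcontra
          exact hs2 (rch_mono (Finset.erase_subset _ _) hcontra)
      · have htogeq : tog A = insert (ed (tA A)) A := by
          rw [htogdef]; simp only []; rw [if_neg heA]
        have hcomm : (tog A).erase (ed s) = insert (ed (tA A)) (A.erase (ed s)) := by
          rw [htogeq, Finset.erase_insert_of_ne hnedr]
        have htail : ¬ rch r (A.erase (ed s)) ((ed (tA A)).1) := by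
          simpa [hedj] using hSLs
        constructor
        · rw [hcomm]
          exact rch_mono (Finset.subset_insert _ _) (by simpa [hedj] using hs1)
        · rw [hcomm]
          intro hcontra
          exact hs2 (rch_insert_of_tail_not htail hcontra)
  have htogtog : ∀ A, A ∈ P → tog (tog A) = A := by
    intro A hA
    have ht := httog A hA
    have hunf : ∀ B, tog B =
        if ed (tA B) ∈ B then B.erase (ed (tA B)) else insert (ed (tA B)) B := fun B => rfl
    rw [hunf (tog A), ht]
    by_cases heA : ed (tA A) ∈ A
    · rw [hunf A, if_pos heA, if_neg (Finset.notMem_erase _ _), Finset.insert_erase heA]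
    · rw [hunf A, if_neg heA, if_pos (Finset.mem_insert_self _ _), Finset.erase_insert heA]
  -- now the involution
  apply Finset.sum_involution (fun A _ => tog A)
  · intro A hA
    have hRF := hRFtog A hA
    set m := (RF r A).card with hm
    rw [hRF]
    by_cases heA : ed (tA A) ∈ A
    · have htogeq : tog A = A.erase (ed (tA A)) := by
        rw [htogdef]; simp only []; rw [if_pos heA]
      have hcard : (tog A).card + 1 = A.card := by
        rw [htogeq]; exact Finset.card_erase_add_one heA
      have hbound : m ≤ (tog A).card + 1 := by
        rw [hm, ← hRF]
        exact (RF_card_le (tog A))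
      set a := (tog A).card with ha
      have hAcard : A.card = a + 1 := by omega
      rw [hAcard]
      have hexp : a + 1 + 1 - m = (a + 1 - m) + 1 := by omega
      rw [hexp, pow_succ]
      ring
    · have htogeq : tog A = insert (ed (tA A)) A := by
        rw [htogdef]; simp only []; rw [if_neg heA]
      have hcard : (tog A).card = A.card + 1 := by
        rw [htogeq]; exact Finset.card_insert_of_notMem heA
      have hbound : m ≤ A.card + 1 := by
        rw [hm]; exact RF_card_le A
      set a := A.card with ha
      rw [hcard]
      have hexp : a + 1 + 1 - m = (a + 1 - m) + 1 := by omega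
      rw [hexp, pow_succ]
      ring
  · intro A hA _
    by_cases heA : ed (tA A) ∈ A
    · have htogeq : tog A = A.erase (ed (tA A)) := by
        rw [htogdef]; simp only []; rw [if_pos heA]
      rw [htogeq]
      intro hcontra
      exact (Finset.erase_eq_self.1 hcontra) heA
    · have htogeq : tog A = insert (ed (tA A)) A := by
        rw [htogdef]; simp only []; rw [if_neg heA]
      rw [htogeq]
      intro hcontra
      exact heA (Finset.insert_eq_self.1 hcontra)
  · intro A hA
    exact htogP A hA
  · intro A hA
    exact htogtog A hA

end DT

namespace DT

variable {V : Type*}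

lemma ite_inst {α : Sort*} {p : Prop} (h1 h2 : Decidable p) (a b : α) :
    @ite α p h1 a b = @ite α p h2 a b := by
  rw [Subsingleton.elim h1 h2]

lemma sum_pow_card {β : Type*} (F : Finset β) (a : ℚ) :
    ∑ C ∈ F.powerset, a ^ C.card = (1 + a) ^ F.card := by
  classical
  induction F using Finset.induction_on with
  | empty => simp
  | @insert x s hx ih =>
    rw [Finset.sum_powerset_insert hx, Finset.card_insert_of_notMem hx]
    have e1 : ∑ t ∈ s.powerset, a ^ (insert x t).card = ∑ t ∈ s.powerset, a * a ^ t.card := by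
      apply Finset.sum_congr rfl
      intro t ht
      rw [Finset.card_insert_of_notMem (fun hxt => hx (Finset.mem_powerset.1 ht hxt)),
        pow_succ, mul_comm]
    rw [e1, ← Finset.mul_sum, ih, pow_succ]
    ring

lemma sum_pow_card_sub {β : Type*} (F : Finset β) (a : ℚ) :
    ∑ C ∈ F.powerset, a ^ (F.card - C.card) = (1 + a) ^ F.card := by
  classical
  induction F using Finset.induction_on with
  | empty => simp
  | @insert x s hx ih =>
    rw [Finset.sum_powerset_insert hx, Finset.card_insert_of_notMem hx]
    have e1 : ∑ t ∈ s.powerset, a ^ (s.card + 1 - t.card)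
        = ∑ t ∈ s.powerset, a * a ^ (s.card - t.card) := by
      apply Finset.sum_congr rfl
      intro t ht
      have htc : t.card ≤ s.card := Finset.card_le_card (Finset.mem_powerset.1 ht)
      rw [show s.card + 1 - t.card = (s.card - t.card) + 1 by omega, pow_succ, mul_comm]
    have e2 : ∑ t ∈ s.powerset, a ^ (s.card + 1 - (insert x t).card)
        = ∑ t ∈ s.powerset, a ^ (s.card - t.card) := by
      apply Finset.sum_congr rfl
      intro t ht
      rw [Finset.card_insert_of_notMem (fun hxt => hx (Finset.mem_powerset.1 ht hxt))]
      congr 1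
      omega
    rw [e1, e2, ← Finset.mul_sum, ih, pow_succ]
    ring

lemma sum_neg_one_pow {β : Type*} (F : Finset β) :
    ∑ C ∈ F.powerset, (-1 : ℚ) ^ C.card = if F = ∅ then 1 else 0 := by
  rw [sum_pow_card, show (1 + (-1 : ℚ)) = 0 from by ring, zero_pow_eq]
  simp [Finset.card_eq_zero]

section Fin

variable [Fintype V]

lemma RF_filter_tail {r : V} {S : Finset V} {A : Finset (V × V)} (h : RF r A = S) :
    RF r (A.filter (fun p => p.1 ∈ S)) = S := by
  have hsub : RF r (A.filter (fun p => p.1 ∈ S)) ⊆ S :=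
    h ▸ RF_mono (Finset.filter_subset _ _)
  have key : ∀ v, rch r A v → rch r (A.filter (fun p => p.1 ∈ S)) v := by
    intro v hv
    induction hv with
    | refl => exact rch_refl _ _
    | @tail b c _ hbc ih =>
      have hbS : b ∈ S := hsub (mem_RF.2 ih)
      exact ih.tail (Finset.mem_filter.2 ⟨hbc, hbS⟩)
  refine Finset.Subset.antisymm hsub (fun v hv => ?_)
  have hv' : rch r A v := mem_RF.1 (by rw [h]; exact hv)
  exact mem_RF.2 (key v hv')

lemma RF_union_free {r : V} {S : Finset V} {B C : Finset (V × V)} (hB : RF r B = S)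
    (hC : ∀ p ∈ C, p.1 ∉ S) : RF r (B ∪ C) = S := by
  refine Finset.Subset.antisymm ?_ (hB ▸ RF_mono Finset.subset_union_left)
  intro v hv
  have key : ∀ v, rch r (B ∪ C) v → rch r B v := by
    intro v hv
    induction hv with
    | refl => exact rch_refl _ _
    | @tail b c _ hbc ih =>
      rcases Finset.mem_union.1 hbc with h | h
      · exact ih.tail h
      · exact absurd (hB ▸ mem_RF.2 ih) (hC _ h)
  rw [← hB]
  exact mem_RF.2 (key v (mem_RF.1 hv))

lemma coreSum_split (D : V → V → Prop) (r : V) (S : Finset V) :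
    ∑ A ∈ (dEdgeFinset D).powerset.filter (fun A => RF r A = S), (-1 : ℚ) ^ A.card
      = (∑ B ∈ ((dEdgeFinset D).filter (fun p => p.1 ∈ S)).powerset.filter
            (fun B => RF r B = S), (-1 : ℚ) ^ B.card) *
        (∑ C ∈ ((dEdgeFinset D).filter (fun p => p.1 ∉ S)).powerset, (-1 : ℚ) ^ C.card) := by
  classical
  rw [Finset.sum_mul_sum, ← Finset.sum_product']
  apply Finset.sum_nbij'
    (i := fun A => (A.filter (fun p => p.1 ∈ S), A.filter (fun p => p.1 ∉ S)))
    (j := fun bc => bc.1 ∪ bc.2)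
  · intro A hA
    rw [Finset.mem_filter, Finset.mem_powerset] at hA
    rw [Finset.mem_product]
    refine ⟨?_, ?_⟩
    · rw [Finset.mem_filter, Finset.mem_powerset]
      exact ⟨Finset.filter_subset_filter _ hA.1, RF_filter_tail hA.2⟩
    · rw [Finset.mem_powerset]
      exact Finset.filter_subset_filter _ hA.1
  · intro bc hbc
    rw [Finset.mem_product] at hbc
    obtain ⟨h1, h2⟩ := hbc
    rw [Finset.mem_filter, Finset.mem_powerset] at h1
    rw [Finset.mem_powerset] at h2
    rw [Finset.mem_filter, Finset.mem_powerset]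
    constructor
    · exact Finset.union_subset (h1.1.trans (Finset.filter_subset _ _))
        (h2.trans (Finset.filter_subset _ _))
    · exact RF_union_free h1.2 (fun p hp => (Finset.mem_filter.1 (h2 hp)).2)
  · intro A _
    exact Finset.filter_union_filter_not_eq (p := fun p : V × V => p.1 ∈ S) A
  · intro bc hbc
    rw [Finset.mem_product] at hbc
    obtain ⟨h1, h2⟩ := hbc
    rw [Finset.mem_filter, Finset.mem_powerset] at h1
    rw [Finset.mem_powerset] at h2
    have hB1 : bc.1.filter (fun p => p.1 ∈ S) = bc.1 :=
      Finset.filter_eq_self.2 (fun p hp => (Finset.mem_filter.1 (h1.1 hp)).2)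
    have hB2 : bc.2.filter (fun p => p.1 ∈ S) = ∅ :=
      Finset.filter_eq_empty_iff.2 (fun {p} hp => (Finset.mem_filter.1 (h2 hp)).2)
    have hC1 : bc.1.filter (fun p => p.1 ∉ S) = ∅ :=
      Finset.filter_eq_empty_iff.2
        (fun {p} hp h => h (Finset.mem_filter.1 (h1.1 hp)).2)
    have hC2 : bc.2.filter (fun p => p.1 ∉ S) = bc.2 :=
      Finset.filter_eq_self.2 (fun p hp => (Finset.mem_filter.1 (h2 hp)).2)
    have := Finset.filter_union (fun p : V × V => p.1 ∈ S) bc.1 bc.2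
    have h2' := Finset.filter_union (fun p : V × V => p.1 ∉ S) bc.1 bc.2
    apply Prod.ext
    · simp only []
      rw [this, hB1, hB2, Finset.union_empty]
    · simp only []
      rw [h2', hC1, hC2, Finset.empty_union]
  · intro A hA
    simp only []
    rw [← pow_add]
    congr 1
    exact (Finset.card_filter_add_card_filter_not (s := A)
      (p := fun p : V × V => p.1 ∈ S)).symm

end Fin
end DT

namespace DT

variable {V : Type*} [Fintype V]

lemma acyclic_wf {D : V → V → Prop}
    (hacyc : ∀ u v, D u v → ¬ Relation.ReflTransGen D v u) :
    WellFounded (fun a b : V => D a b) := by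
  have ht : IsTrans V (fun a b => Relation.TransGen D a b) :=
    ⟨fun a b c h1 h2 => h1.trans h2⟩
  have hi : IsIrrefl V (fun a b => Relation.TransGen D a b) := ⟨by
    intro a h
    rcases (Relation.transGen_iff D a a).1 h with h | ⟨c, hc1, hc2⟩
    · exact hacyc a a h Relation.ReflTransGen.refl
    · exact hacyc c a hc2 hc1.to_reflTransGen⟩
  exact Subrelation.wf (fun {a b} h => Relation.TransGen.single h)
    (Finite.wellFounded_of_trans_of_irrefl _)

lemma span_char {D : V → V → Prop} {r : V}
    (hacyc : ∀ u v, D u v → ¬ Relation.ReflTransGen D v u) {S : Finset V}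
    (hrS : r ∈ S) (hT : ∀ u v, D u v → u ∈ S) {B : Finset (V × V)}
    (hBE : B ⊆ dEdgeFinset D) :
    RF r B = S ↔ (∀ e ∈ B, e.2 ∈ S) ∧ ∀ v ∈ S.erase r, ∃ e ∈ B, e.2 = v := by
  constructor
  · intro h
    constructor
    · intro e he
      have hD : D e.1 e.2 := mem_dEdgeFinset.1 (hBE he)
      have h1' : rch r B e.1 := mem_RF.1 (by rw [h]; exact hT _ _ hD)
      have h2' : rch r B e.2 := h1'.tail (by rw [Prod.mk.eta]; exact he)
      rw [← h]
      exact mem_RF.2 h2'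
    · intro v hv
      obtain ⟨hvr, hvS⟩ := Finset.mem_erase.1 hv
      have hr : rch r B v := mem_RF.1 (by rw [h]; exact hvS)
      rcases hr.cases_tail with h' | ⟨c, _, hc⟩
      · exact absurd h' hvr
      · exact ⟨(c, v), hc, rfl⟩
  · rintro ⟨hheads, hindeg⟩
    have key1 : ∀ v, rch r B v → v ∈ S := by
      intro v hv
      induction hv with
      | refl => exact hrS
      | @tail b c _ hbc _ => exact hheads (b, c) hbc
    have key2 : ∀ v, v ∈ S → rch r B v := by
      intro v
      refine (acyclic_wf hacyc).induction (C := fun v => v ∈ S → rch r B v) v ?_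
      intro x ih hx
      by_cases hxr : x = r
      · rw [hxr]; exact rch_refl r B
      · obtain ⟨e, heB, he2⟩ := hindeg x (Finset.mem_erase.2 ⟨hxr, hx⟩)
        have hD : D e.1 e.2 := mem_dEdgeFinset.1 (hBE heB)
        have hDx : D e.1 x := he2 ▸ hD
        have hre1 : rch r B e.1 := ih e.1 hDx (hT _ _ hD)
        have hBe : (e.1, x) ∈ B := by rw [← he2, Prod.mk.eta]; exact heB
        exact hre1.tail hBe
    ext v
    simp only [mem_RF]
    exact ⟨key1 v, key2 v⟩

lemma GS_acyclic {D : V → V → Prop} {r : V}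
    (hrc : ∀ v, Relation.ReflTransGen D r v)
    (hacyc : ∀ u v, D u v → ¬ Relation.ReflTransGen D v u)
    {S : Finset V} (hrS : r ∈ S) (hT : ∀ u v, D u v → u ∈ S) :
    ∑ B ∈ (dEdgeFinset D).powerset.filter (fun B => RF r B = S), (-1 : ℚ) ^ B.card
      = (-1 : ℚ) ^ (S.card - 1) := by
  classical
  set E' := (dEdgeFinset D).filter (fun e => e.2 ∈ S) with hE'
  set E'' := fun U : Finset V => E'.filter (fun e => e.2 ∉ U) with hE''
  have hheadr : ∀ e ∈ dEdgeFinset D, e.2 ≠ r := by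
    intro e he hr
    have hD := mem_dEdgeFinset.1 he
    rw [hr] at hD
    exact hacyc _ _ hD (hrc e.1)
  have hhead_ex : ∀ v ∈ S.erase r, ∃ e ∈ E', e.2 = v := by
    intro v hv
    obtain ⟨hvr, hvS⟩ := Finset.mem_erase.1 hv
    rcases (hrc v).cases_tail with h | ⟨c, _, hc⟩
    · exact absurd h hvr
    · exact ⟨(c, v), Finset.mem_filter.2 ⟨mem_dEdgeFinset.2 hc, hvS⟩, rfl⟩
  have hset : (dEdgeFinset D).powerset.filter (fun B => RF r B = S)
      = E'.powerset.filter (fun B => ∀ v ∈ S.erase r, ∃ e ∈ B, e.2 = v) := by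
    ext B
    simp only [Finset.mem_filter, Finset.mem_powerset]
    constructor
    · rintro ⟨hBE, hRF⟩
      have hc := (span_char hacyc hrS hT hBE).1 hRF
      exact ⟨fun e he => Finset.mem_filter.2 ⟨hBE he, hc.1 e he⟩, hc.2⟩
    · rintro ⟨hBE', hcond⟩
      have hBE : B ⊆ dEdgeFinset D := hBE'.trans (Finset.filter_subset _ _)
      refine ⟨hBE, (span_char hacyc hrS hT hBE).2 ⟨?_, hcond⟩⟩
      exact fun e he => (Finset.mem_filter.1 (hBE' he)).2
  have hinner : ∀ U : Finset V,
      ∑ B ∈ E'.powerset,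
          ((-1 : ℚ) ^ B.card * (if (∀ e ∈ B, e.2 ∉ U) then (1 : ℚ) else 0))
        = if E'' U = ∅ then 1 else 0 := by
    intro U
    have h1 : ∑ B ∈ E'.powerset,
        ((-1:ℚ)^B.card * (if (∀ e ∈ B, e.2 ∉ U) then (1:ℚ) else 0))
          = ∑ B ∈ (E'' U).powerset,
              ((-1:ℚ)^B.card * (if (∀ e ∈ B, e.2 ∉ U) then (1:ℚ) else 0)) := by
      symm
      apply Finset.sum_subset (Finset.powerset_mono.2 (Finset.filter_subset _ _))
      intro B hB hnB
      rw [Finset.mem_powerset] at hB hnB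
      have hni : ¬ (∀ e ∈ B, e.2 ∉ U) := by
        intro hall
        exact hnB (fun e he => Finset.mem_filter.2 ⟨hB he, hall e he⟩)
      rw [if_neg hni, mul_zero]
    have h2 : ∑ B ∈ (E'' U).powerset,
        ((-1:ℚ)^B.card * (if (∀ e ∈ B, e.2 ∉ U) then (1:ℚ) else 0))
          = ∑ B ∈ (E'' U).powerset, (-1:ℚ)^B.card := by
      apply Finset.sum_congr rfl
      intro B hB
      rw [Finset.mem_powerset] at hB
      rw [if_pos (fun e he => (Finset.mem_filter.1 (hB he)).2), mul_one]
    rw [h1, h2, sum_neg_one_pow]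
    exact ite_inst _ _ _ _
  have step1 : ∀ B ∈ E'.powerset,
      (if (∀ v ∈ S.erase r, ∃ e ∈ B, e.2 = v) then ((-1:ℚ) ^ B.card) else 0)
        = ∑ U ∈ (S.erase r).powerset,
            (-1:ℚ)^U.card * ((-1:ℚ)^B.card * (if (∀ e ∈ B, e.2 ∉ U) then (1:ℚ) else 0)) := by
    intro B _
    have l1 : (if (∀ v ∈ S.erase r, ∃ e ∈ B, e.2 = v) then ((-1:ℚ) ^ B.card) else 0)
        = (-1:ℚ)^B.card * ∏ v ∈ S.erase r, (if (∃ e ∈ B, e.2 = v) then (1:ℚ) else 0) := by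
      rw [Finset.prod_boole]
      by_cases h : ∀ v ∈ S.erase r, ∃ e ∈ B, e.2 = v
      · rw [if_pos h, if_pos h, mul_one]
      · rw [if_neg h, if_neg h, mul_zero]
    have l2 : ∀ v ∈ S.erase r, (if (∃ e ∈ B, e.2 = v) then (1:ℚ) else 0)
        = (-(if (∀ e ∈ B, e.2 ≠ v) then (1:ℚ) else 0)) + 1 := by
      intro v _
      by_cases h : ∃ e ∈ B, e.2 = v
      · rw [if_pos h, if_neg (by push_neg; exact h), neg_zero, zero_add]
      · push_neg at h
        rw [if_neg (by push_neg; exact h), if_pos h]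
        ring
    rw [l1, Finset.prod_congr rfl l2, Finset.prod_add, Finset.mul_sum]
    apply Finset.sum_congr rfl
    intro U hU
    rw [Finset.prod_const_one, mul_one]
    have l3 : ∏ v ∈ U, (-(if (∀ e ∈ B, e.2 ≠ v) then (1:ℚ) else 0))
        = (-1:ℚ)^U.card * (if (∀ v ∈ U, ∀ e ∈ B, e.2 ≠ v) then (1:ℚ) else 0) := by
      have : (fun v => (-(if (∀ e ∈ B, e.2 ≠ v) then (1:ℚ) else 0)))
          = fun v => ((-1:ℚ) * (if (∀ e ∈ B, e.2 ≠ v) then (1:ℚ) else 0)) := by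
        funext v; ring
      rw [this, Finset.prod_mul_distrib, Finset.prod_const, Finset.prod_boole]
      congr 1
      exact ite_inst _ _ _ _
    have hiff : (∀ v ∈ U, ∀ e ∈ B, e.2 ≠ v) ↔ (∀ e ∈ B, e.2 ∉ U) := by
      constructor
      · intro h e he hv
        exact h _ hv e he rfl
      · intro h v hv e he hev
        exact h e he (hev ▸ hv)
    rw [l3, if_congr hiff rfl rfl]
    ring
  rw [hset, Finset.sum_filter, Finset.sum_congr rfl step1, Finset.sum_comm]
  have step2 : ∀ U ∈ (S.erase r).powerset,
      (∑ B ∈ E'.powerset,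
        (-1:ℚ)^U.card * ((-1:ℚ)^B.card * (if (∀ e ∈ B, e.2 ∉ U) then (1:ℚ) else 0)))
        = (-1:ℚ)^U.card * (if E'' U = ∅ then 1 else 0) := by
    intro U _
    rw [← Finset.mul_sum, hinner U]
  rw [Finset.sum_congr rfl step2]
  rw [Finset.sum_eq_single (S.erase r)]
  · have hemp : E'' (S.erase r) = ∅ := by
      rw [hE'']
      apply Finset.filter_eq_empty_iff.2
      intro e he hnot
      have h1 : e.2 ∈ S := (Finset.mem_filter.1 he).2
      have h2 : e.2 ≠ r := hheadr e ((Finset.filter_subset _ _) he)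
      exact hnot (Finset.mem_erase.2 ⟨h2, h1⟩)
    rw [if_pos hemp, mul_one, Finset.card_erase_of_mem hrS]
  · intro U hU hne
    have hUsub : U ⊆ S.erase r := Finset.mem_powerset.1 hU
    have hss : U ⊂ S.erase r := Finset.ssubset_iff_subset_ne.2 ⟨hUsub, hne⟩
    obtain ⟨v, hv1, hv2⟩ := Finset.exists_of_ssubset hss
    obtain ⟨e, he, he2⟩ := hhead_ex v hv1
    have : E'' U ≠ ∅ := by
      apply Finset.ne_empty_of_mem (a := e)
      rw [hE'']
      exact Finset.mem_filter.2 ⟨he, by rw [he2]; exact hv2⟩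
    rw [if_neg this, mul_zero]
  · intro h
    exact absurd (Finset.mem_powerset.2 (Finset.Subset.refl _)) h

end DT

namespace DT

variable {V : Type*} [Fintype V]

lemma dTutte_eq (D : V → V → Prop) (r : V)
    (hrc : ∀ v, Relation.ReflTransGen D r v) (x : ℚ) :
    dTutte D r x 0 = ∑ A ∈ (dEdgeFinset D).powerset,
      (x - 1) ^ (Fintype.card V - (RF r A).card) *
        (-1 : ℚ) ^ ((A.card + 1) - (RF r A).card) := by
  unfold dTutte
  apply Finset.sum_congr rfl
  intro A hA
  rw [Finset.mem_powerset] at hA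
  have hEdges : ∀ p ∈ A, D p.1 p.2 := fun p hp => mem_dEdgeFinset.1 (hA hp)
  have hEd : ∀ p ∈ dEdgeFinset D, D p.1 p.2 := fun p hp => mem_dEdgeFinset.1 hp
  have h1 : dRank D r A + 1 = (RF r A).card := dRank_add_one hEdges
  have h2 : dRank D r (dEdgeFinset D) + 1 = Fintype.card V := by
    rw [dRank_add_one hEd, RF_dEdgeFinset hrc, Finset.card_univ]
  have e1 : dRank D r (dEdgeFinset D) - dRank D r A
      = Fintype.card V - (RF r A).card := by omega
  have e2 : A.card - dRank D r A = (A.card + 1) - (RF r A).card := by omega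
  rw [e1, e2]
  norm_num

lemma core_acyclic (D : V → V → Prop) (r : V)
    (hrc : ∀ v, Relation.ReflTransGen D r v)
    (hacyc : ∀ u v, D u v → ¬ Relation.ReflTransGen D v u) (x : ℚ) :
    ∑ A ∈ (dEdgeFinset D).powerset,
      (x - 1) ^ (Fintype.card V - (RF r A).card) *
        (-1 : ℚ) ^ ((A.card + 1) - (RF r A).card) = x ^ sinkCount D := by
  classical
  set F := Finset.univ.filter (fun v : V => v = r ∨ ∃ w, D v w) with hF
  rw [← Finset.sum_fiberwise_of_maps_to (g := RF r)
    (t := (Finset.univ : Finset V).powerset)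
    (fun A _ => Finset.mem_powerset.2 (Finset.subset_univ _)) _]
  have hfiber : ∀ S ∈ (Finset.univ : Finset V).powerset,
      (∑ A ∈ (dEdgeFinset D).powerset.filter (fun A => RF r A = S),
        (x - 1) ^ (Fintype.card V - (RF r A).card) *
          (-1:ℚ) ^ ((A.card + 1) - (RF r A).card))
      = if F ⊆ S then (x-1) ^ (Fintype.card V - S.card) else 0 := by
    intro S _
    by_cases hrs : r ∈ S
    case neg =>
      have hempty : (dEdgeFinset D).powerset.filter (fun A => RF r A = S) = ∅ := by
        apply Finset.filter_eq_empty_iff.2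
        intro A _ hAS
        exact hrs (hAS ▸ r_mem_RF)
      rw [hempty, Finset.sum_empty, if_neg]
      intro hFS
      exact hrs (hFS (Finset.mem_filter.2 ⟨Finset.mem_univ r, Or.inl rfl⟩))
    case pos =>
      have hsummand : ∀ A ∈ (dEdgeFinset D).powerset.filter (fun A => RF r A = S),
          (x - 1) ^ (Fintype.card V - (RF r A).card) *
            (-1:ℚ) ^ ((A.card + 1) - (RF r A).card)
          = ((x-1) ^ (Fintype.card V - S.card) * (-1:ℚ) ^ (S.card + 1)) * (-1:ℚ) ^ A.card := by
        intro A hA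
        rw [Finset.mem_filter] at hA
        obtain ⟨hApow, hAS⟩ := hA
        rw [hAS]
        have hb : S.card ≤ A.card + 1 := by
          rw [← hAS]; exact RF_card_le A
        obtain ⟨c, hc⟩ : ∃ c, A.card + 1 = S.card + c := ⟨A.card + 1 - S.card, by omega⟩
        have h1 : A.card + 1 - S.card = c := by omega
        rw [h1]
        have h2 : (-1:ℚ) ^ (S.card + 1) * (-1:ℚ) ^ A.card = (-1) ^ c := by
          rw [← pow_add]
          have h3 : S.card + 1 + A.card = 2 * S.card + c := by omega
          rw [h3, pow_add, pow_mul]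
          norm_num
        rw [mul_assoc, h2]
      rw [Finset.sum_congr rfl hsummand, ← Finset.mul_sum, coreSum_split D r S]
      by_cases hFS : F ⊆ S
      case pos =>
        have hmemS : ∀ u v, D u v → u ∈ S := fun u v h =>
          hFS (Finset.mem_filter.2 ⟨Finset.mem_univ _, Or.inr ⟨v, h⟩⟩)
        have hEC : (dEdgeFinset D).filter (fun p : V × V => p.1 ∉ S) = ∅ := by
          apply Finset.filter_eq_empty_iff.2
          intro p hp hnot
          exact hnot (hmemS _ _ (mem_dEdgeFinset.1 hp))
        have hES : (dEdgeFinset D).filter (fun p : V × V => p.1 ∈ S) = dEdgeFinset D := by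
          apply Finset.filter_true_of_mem
          intro p hp
          exact hmemS _ _ (mem_dEdgeFinset.1 hp)
        rw [hEC, hES, GS_acyclic hrc hacyc hrs hmemS, Finset.powerset_empty,
          Finset.sum_singleton, Finset.card_empty, pow_zero, mul_one, if_pos hFS]
        have hS1 : 1 ≤ S.card := Finset.card_pos.2 ⟨r, hrs⟩
        have h4 : (-1:ℚ) ^ (S.card + 1) * (-1:ℚ) ^ (S.card - 1) = 1 := by
          rw [← pow_add]
          have h3 : S.card + 1 + (S.card - 1) = 2 * S.card := by omega
          rw [h3, pow_mul]
          norm_num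
        rw [mul_assoc, h4, mul_one]
      case neg =>
        obtain ⟨v, hvF, hvS⟩ := Finset.not_subset.1 hFS
        have hv := (Finset.mem_filter.1 hvF).2
        rcases hv with rfl | ⟨w, hw⟩
        · exact absurd hrs hvS
        · have hne : (dEdgeFinset D).filter (fun p : V × V => p.1 ∉ S) ≠ ∅ :=
            Finset.ne_empty_of_mem (a := (v, w))
              (Finset.mem_filter.2 ⟨mem_dEdgeFinset.2 hw, hvS⟩)
          rw [sum_neg_one_pow, if_neg hne, mul_zero, mul_zero, if_neg hFS]
  rw [Finset.sum_congr rfl hfiber, ← Finset.sum_filter]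
  have hbij : ∑ S ∈ (Finset.univ : Finset V).powerset.filter (fun S => F ⊆ S),
      (x-1) ^ (Fintype.card V - S.card)
      = ∑ K ∈ Fᶜ.powerset, (x-1) ^ (Fᶜ.card - K.card) := by
    apply Finset.sum_nbij' (i := fun S => S \ F) (j := fun K => K ∪ F)
    · intro S hS
      rw [Finset.mem_powerset]
      intro v hv
      rw [Finset.mem_sdiff] at hv
      rw [Finset.mem_compl]
      exact hv.2
    · intro K hK
      rw [Finset.mem_powerset] at hK
      rw [Finset.mem_filter, Finset.mem_powerset]
      exact ⟨Finset.subset_univ _, Finset.subset_union_right⟩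
    · intro S hS
      rw [Finset.mem_filter] at hS
      exact Finset.sdiff_union_of_subset hS.2
    · intro K hK
      rw [Finset.mem_powerset] at hK
      have hdisj : Disjoint K F := by
        rw [Finset.disjoint_left]
        intro a haK haF
        exact (Finset.mem_compl.1 (hK haK)) haF
      rw [Finset.union_sdiff_cancel_right hdisj]
    · intro S hS
      rw [Finset.mem_filter] at hS
      congr 1
      have h1 : (S \ F).card = S.card - F.card := Finset.card_sdiff_of_subset hS.2
      have h2 : Fᶜ.card = Fintype.card V - F.card := Finset.card_compl F
      have h3 : F.card ≤ S.card := Finset.card_le_card hS.2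
      have h4 : S.card ≤ Fintype.card V := Finset.card_le_univ S
      omega
  rw [hbij, sum_pow_card_sub]
  have hsc : sinkCount D = Fᶜ.card := by
    unfold sinkCount
    rw [Set.ncard_eq_toFinset_card', Set.toFinset_setOf]
    congr 1
    ext v
    simp only [Finset.mem_filter, Finset.mem_univ, true_and, Finset.mem_compl, hF]
    constructor
    · rintro ⟨⟨u, hu⟩, hnout⟩
      rintro (rfl | ⟨w, hw⟩)
      · rcases hu with hu | hu
        · exact hacyc u v hu (hrc u)
        · exact hnout _ hu
      · exact hnout w hw
    · intro h
      push_neg at h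
      obtain ⟨hvr, hnout⟩ := h
      refine ⟨?_, hnout⟩
      rcases (hrc v).cases_tail with h' | ⟨c, _, hc⟩
      · exact absurd h' hvr
      · exact ⟨c, Or.inl hc⟩
  rw [hsc, show (1:ℚ) + (x - 1) = x from by ring]

end DT


/-- Let `(D, r)` be a root-connected rooted digraph with `s` sinks.
Then `T(D; x, 0) = x^s` if `D` is acyclic, and `T(D; x, 0) = 0` if `D` contains a
directed cycle. -/
theorem dTutte_at_y_zero {V : Type*} [Fintype V] (D : V → V → Prop) (r : V)
    (hrc : ∀ v, Relation.ReflTransGen D r v) (x : ℚ) :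
    ((∀ u v, D u v → ¬ Relation.ReflTransGen D v u) →
      dTutte D r x 0 = x ^ sinkCount D) ∧
    ((∃ u v, D u v ∧ Relation.ReflTransGen D v u) → dTutte D r x 0 = 0) := by
  constructor
  · intro hacyc
    rw [DT.dTutte_eq D r hrc x]
    exact DT.core_acyclic D r hrc hacyc x
  · intro hcyc
    rw [DT.dTutte_eq D r hrc x]
    exact DT.core_cyclic hcyc x
end
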